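/- For N ≥ 5 prime and the Alltop sequence f_n = (1/√N) e^{2πi n³/N}, for any nonzero cyclic shift k ≢ 0 (mod N) and any j ∈ ℤ/N, the inner product ⟨f, M^j T^k f⟩ = (1/N) Σ_{n=0}^{N−1} e^{2πi(n³ − (n−k)³ − jn)/N} has modulus 1/√N (a normalized quadratic Gauss sum). -/

import Mathlib

/-!
In `conj f(n) · f(n - k)` the cubic terms of the phase `(n - k)³ - n³` cancel, so
`⟨f, M^j T^k f⟩` is `1/N` times a quadratic Gauss sum `∑ ψ(a n² + b n + c)` with `a = -3k`.
Substituting `n = m + d` in `|∑|²` and summing over `m` first leaves, by orthogonality of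
characters, only `d = 0` once `2a` is a unit; this needs `N ≠ 2, 3`. Hence `|∑|² = N`.
-/

open Complex Matrix

namespace AddChar

variable {R : Type*} [CommRing R] [Fintype R]

theorem norm_sum_quadratic {ψ : AddChar R ℂ} (hψ : ψ.IsPrimitive) {a : R} (ha : IsUnit (2 * a))
    (b c : R) : ‖∑ x, ψ (a * x ^ 2 + b * x + c)‖ = √(Fintype.card R) := by
  classical
  set q : R → R := fun x => a * x ^ 2 + b * x + c
  have hq (m d : R) : q (m + d) - q m = a * d ^ 2 + b * d + m * (2 * a * d) := by
    simp only [q]; ring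
  have h_sq : (‖∑ x, ψ (q x)‖ ^ 2 : ℂ) = Fintype.card R := calc
    _ = ∑ m, ∑ n, ψ (q n - q m) := by
      simp only [← conj_mul', map_sum, Finset.sum_mul, Finset.mul_sum, sub_eq_neg_add,
        map_add_eq_mul, map_neg_eq_conj]
      exact Finset.sum_comm
    _ = ∑ m, ∑ d, ψ (a * d ^ 2 + b * d) * ψ (m * (2 * a * d)) := by
      refine Fintype.sum_congr _ _ fun m => ?_
      refine (Fintype.sum_equiv (Equiv.addLeft m) _ _ fun d => ?_).symm
      rw [Equiv.coe_addLeft, hq, map_add_eq_mul ψ (_ + _)]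
    _ = ∑ d, ψ (a * d ^ 2 + b * d) * ∑ m, ψ (m * (2 * a * d)) := by
      rw [Finset.sum_comm]; simp only [Finset.mul_sum]
    _ = Fintype.card R := by
      simp [sum_mulShift _ hψ, ha.mul_right_eq_zero]
  rw [← Real.sqrt_sq (norm_nonneg _)]
  exact congrArg Real.sqrt (by exact_mod_cast h_sq)

end AddChar

namespace ZMod

variable {N : ℕ} [NeZero N]

lemma finEquiv_apply (i : Fin N) : finEquiv N i = ((i : ℕ) : ZMod N) := by
  cases N with
  | zero => exact absurd rfl (NeZero.ne 0)
  | succ n => exact (Fin.cast_val_eq_self i).symm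

lemma stdAddChar_natCast (n : ℕ) : stdAddChar (n : ZMod N) = exp (2 * Real.pi * I * n / N) := by
  simpa using stdAddChar_coe (N := N) n

end ZMod

open ZMod Fin.NatCast

section Alltop

variable (R : Type*) [Semiring R] (N : ℕ) [NeZero N]

def cyclicShift : Matrix (Fin N) (Fin N) R := of fun i j => if i = j + 1 then 1 else 0

variable {R N}

lemma cyclicShift_mulVec (g : Fin N → R) (i : Fin N) :
    (cyclicShift R N *ᵥ g) i = g (i - 1) := by
  simp only [cyclicShift, mulVec, dotProduct, of_apply, ite_mul, one_mul, zero_mul,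
    ← sub_eq_iff_eq_add]
  simp

lemma cyclicShift_pow_mulVec (m : ℕ) (g : Fin N → R) :
    cyclicShift R N ^ m *ᵥ g = fun i => g (i - m) := by
  induction m with
  | zero => simp
  | succ m ih =>
    ext i
    rw [pow_succ', ← mulVec_mulVec, cyclicShift_mulVec, ih, Nat.cast_succ, add_comm, ← sub_sub]

variable (N)

noncomputable def modulation : Matrix (Fin N) (Fin N) ℂ :=
  diagonal fun m => exp (2 * Real.pi * I * (m : ℕ) / N)

noncomputable def chirp (c : ℝ) (p : ZMod N → ZMod N) : EuclideanSpace ℂ (Fin N) :=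
  WithLp.toLp 2 fun n => c * stdAddChar (p (finEquiv N n))

variable {N}

lemma modulation_pow_mulVec (j : ℕ) (g : Fin N → ℂ) :
    modulation N ^ j *ᵥ g = fun i => stdAddChar ((j : ZMod N) * finEquiv N i) * g i := by
  ext i
  rw [modulation, diagonal_pow, mulVec_diagonal, Pi.pow_apply, ← stdAddChar_natCast,
    ← finEquiv_apply, ← AddChar.map_nsmul_eq_pow, nsmul_eq_mul]

lemma inner_chirp_modulation_shift (c : ℝ) (p : ZMod N → ZMod N) (k j : Fin N) :
    inner ℂ (chirp N c p) (WithLp.toLp 2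
        ((modulation N ^ (j : ℕ) * cyclicShift ℂ N ^ (k : ℕ)).mulVec (chirp N c p))) =
      (c : ℂ) ^ 2 * ∑ x, stdAddChar (p (x - finEquiv N k) - p x + finEquiv N j * x) := by
  rw [← mulVec_mulVec, cyclicShift_pow_mulVec, modulation_pow_mulVec, PiLp.inner_apply,
    Finset.mul_sum]
  refine Fintype.sum_equiv (finEquiv N).toEquiv _ _ fun i => ?_
  have hψ (u v w : ZMod N) :
      stdAddChar (u + v - w) = stdAddChar u * stdAddChar v * starRingEnd ℂ (stdAddChar w) := by
    rw [sub_eq_add_neg, AddChar.map_add_eq_mul, AddChar.map_add_eq_mul, AddChar.map_neg_eq_conj]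
  simp only [chirp, WithLp.ofLp_toLp, RCLike.inner_apply, Fin.cast_val_eq_self, ← finEquiv_apply,
    map_sub, map_mul, conj_ofReal, RingEquiv.toEquiv_eq_coe, EquivLike.coe_coe,
    sub_add_eq_add_sub, hψ]
  ring

end Alltop

/-- For the Alltop sequence (`N ≥ 5` prime), for any nonzero cyclic shift `k` and any
modulation `j`, `|⟨f, M^j T^k f⟩| = 1/√N`. -/
theorem alltop_self_vs_shift (N : ℕ) [NeZero N] (hp : N.Prime) (hN : 5 ≤ N)
    (T : Matrix (Fin N) (Fin N) ℂ)
    (hT : T = fun i j => if i = j + 1 then 1 else 0)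
    (M : Matrix (Fin N) (Fin N) ℂ)
    (hM : M = Matrix.diagonal fun m : Fin N =>
      Complex.exp (2 * Real.pi * Complex.I * (m : ℕ) / N))
    (f : EuclideanSpace ℂ (Fin N))
    (hf : f = fun n : Fin N => (1 / Real.sqrt N : ℝ) *
      Complex.exp (2 * Real.pi * Complex.I * ((n : ℕ) ^ 3) / N))
    (k : Fin N) (hk : k ≠ 0) (j : Fin N) :
    ‖(inner ℂ f (show EuclideanSpace ℂ (Fin N) from
        WithLp.toLp 2 ((M ^ (j : ℕ) * T ^ (k : ℕ)).mulVec f)) : ℂ)‖ = 1 / Real.sqrt N := by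
  have : Fact N.Prime := ⟨hp⟩
  obtain rfl : T = cyclicShift ℂ N := hT
  obtain rfl : M = modulation N := hM
  obtain rfl : f = chirp N (1 / √N) (· ^ 3) := WithLp.ofLp_injective 2 <| hf.trans <| funext
    fun n => by
      simp only [chirp, WithLp.ofLp_toLp, finEquiv_apply, ← Nat.cast_pow, stdAddChar_natCast]
  rw [inner_chirp_modulation_shift, norm_mul]
  set κ := finEquiv N k
  have hκ : κ ≠ 0 := (map_ne_zero_iff _ (finEquiv N).injective).2 hk
  have h_cube (x : ZMod N) : (x - κ) ^ 3 - x ^ 3 + finEquiv N j * x =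
      -(3 * κ) * x ^ 2 + (3 * κ ^ 2 + finEquiv N j) * x + -κ ^ 3 := by ring
  have h_small (n : ℕ) (hn : n < N) (h0 : n ≠ 0) : (n : ZMod N) ≠ 0 := fun h =>
    h0 (Nat.eq_zero_of_dvd_of_lt ((ZMod.natCast_eq_zero_iff n N).1 h) hn)
  have h_unit : IsUnit (2 * -(3 * κ)) := isUnit_iff_ne_zero.2 <|
    mul_ne_zero (mod_cast h_small 2 (by omega) two_ne_zero) <|
      neg_ne_zero.2 <| mul_ne_zero (mod_cast h_small 3 (by omega) three_ne_zero) hκ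
  simp only [h_cube]
  rw [AddChar.norm_sum_quadratic (ZMod.isPrimitive_stdAddChar N) h_unit, ZMod.card, norm_pow,
    Complex.norm_real, Real.norm_eq_abs, sq_abs]
  field_simp
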